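/- For every integer n ≥ 3 and every v ∈ [0, v̄]: 3·J̃''(v) + v·J̃'''(v) < 0. -/

import Mathlib

/-!
Write `x = v / v̄` and `a m = log (m + ω₀)`. Then `J̃` is the Bernstein polynomial of degree
`N = n - 1` with coefficients `a`, evaluated at `x`. Differentiation acts on Bernstein
coefficients as `N Δ` (lowering the degree) and `x d/dx` as `c k ↦ k (c k - c (k - 1))`,
so `v̄² (3 J̃'' + v J̃''')` is `N (N - 1)` times the Bernstein polynomial of degree `N - 2` with
coefficients `(k + 3) Δ²a k - k Δ²a (k - 1)`. With `u = k + ω₀`,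
`Δ²a k = log (u (u + 2) / (u + 1)²)` lies in `[-1 / (u (u + 2)), -1 / (u + 1)²]`, which makes
these coefficients negative, and a Bernstein polynomial with negative coefficients is negative
on `[0, 1]`.
-/

open Real Finset

/-- The expected social-network benefit at threshold `v` under uniform valuations. -/
noncomputable def Jt (n : ℕ) (ω₀ vbar : ℝ) (v : ℝ) : ℝ :=
  ∑ m ∈ Finset.range n, (Nat.choose (n - 1) m : ℝ) * Real.log ((m : ℝ) + ω₀) *
    (v / vbar) ^ m * (1 - v / vbar) ^ (n - 1 - m)

open Polynomial
open scoped fwdDiff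

section Bernstein

variable {R : Type*} [CommRing R]

noncomputable def bernsteinSum (c : ℕ → R) (N : ℕ) : R[X] :=
  ∑ m ∈ range (N + 1), C (c m) * bernsteinPolynomial R N m

theorem derivative_bernsteinSum_succ (c : ℕ → R) (N : ℕ) :
    derivative (bernsteinSum c (N + 1)) = ((N + 1 : ℕ) : R[X]) * bernsteinSum (Δ_[1] c) N := by
  set B := bernsteinPolynomial R N
  have hshift : ∑ m ∈ range (N + 1), C (c (m + 1)) * B (m + 1) + C (c 0) * B 0
      = ∑ m ∈ range (N + 1), C (c m) * B m := by
    rw [← sum_range_succ' (fun m => C (c m) * B m), sum_range_succ,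
      show B (N + 1) = 0 from bernsteinPolynomial.eq_zero_of_lt R N.lt_succ_self, mul_zero,
      add_zero]
  have hterm : ∀ m, C (c (m + 1)) * derivative (bernsteinPolynomial R (N + 1) (m + 1))
      = ((N + 1 : ℕ) : R[X]) * (C (c (m + 1)) * B m)
        - ((N + 1 : ℕ) : R[X]) * (C (c (m + 1)) * B (m + 1)) := fun m => by
    rw [bernsteinPolynomial.derivative_succ, Nat.add_sub_cancel]; ring
  simp only [bernsteinSum, derivative_sum, derivative_C_mul]
  rw [sum_range_succ']
  simp only [hterm, sum_sub_distrib, ← mul_sum, bernsteinPolynomial.derivative_zero,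
    Nat.add_sub_cancel, fwdDiff, map_sub, sub_mul]
  linear_combination (-((N + 1 : ℕ) : R[X])) * hshift

theorem natCast_succ_mul_X_mul_bernsteinPolynomial (N m : ℕ) :
    ((N + 1 : ℕ) : R[X]) * X * bernsteinPolynomial R N m
      = ((m + 1 : ℕ) : R[X]) * bernsteinPolynomial R (N + 1) (m + 1) := by
  have hchoose : ((N + 1 : ℕ) : R[X]) * (N.choose m : R[X])
      = ((N + 1).choose (m + 1) : R[X]) * ((m + 1 : ℕ) : R[X]) := by
    simpa only [Nat.cast_mul] using
      congrArg (Nat.cast : ℕ → R[X]) (Nat.add_one_mul_choose_eq N m)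
  simp only [bernsteinPolynomial, Nat.add_sub_add_right, pow_succ]
  linear_combination (X ^ m * X * (1 - X) ^ (N - m)) * hchoose

theorem X_mul_derivative_bernsteinSum (c : ℕ → R) (N : ℕ) :
    X * derivative (bernsteinSum c N)
      = bernsteinSum (fun k => k * (c k - c (k - 1))) N := by
  cases N with
  | zero => simp [bernsteinSum, bernsteinPolynomial]
  | succ N =>
    rw [derivative_bernsteinSum_succ]
    simp only [bernsteinSum]
    rw [sum_range_succ' _ (N + 1)]
    simp only [mul_sum, Nat.cast_zero, zero_mul, map_zero, add_zero]
    refine sum_congr rfl fun m _ => ?_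
    simp only [fwdDiff, Nat.add_sub_cancel, map_mul, map_sub, map_natCast]
    linear_combination
      (C (c (m + 1)) - C (c m)) * natCast_succ_mul_X_mul_bernsteinPolynomial (R := R) N m

theorem C_mul_bernsteinSum_add_X_mul_derivative (r : R) (c : ℕ → R) (N : ℕ) :
    C r * bernsteinSum c N + X * derivative (bernsteinSum c N)
      = bernsteinSum (fun k => (r + k) * c k - k * c (k - 1)) N := by
  rw [X_mul_derivative_bernsteinSum]
  simp only [bernsteinSum, mul_sum, ← sum_add_distrib]
  refine sum_congr rfl fun k _ => ?_
  simp only [map_sub, map_mul, map_add, map_natCast]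
  ring

end Bernstein

theorem eval_bernsteinSum_neg {K : Type*} [Field K] [LinearOrder K] [IsStrictOrderedRing K]
    {c : ℕ → K} {N : ℕ} {x : K} (hx0 : 0 ≤ x) (hx1 : x ≤ 1)
    (hc : ∀ k ≤ N, c k < 0) : (bernsteinSum c N).eval x < 0 := by
  have hb : ∀ m, 0 ≤ (bernsteinPolynomial K N m).eval x := fun m => by
    have : 0 ≤ 1 - x := by linarith
    simp only [bernsteinPolynomial, eval_mul, eval_pow, eval_natCast, eval_X, eval_sub, eval_one]
    positivity
  have hsum : ∑ m ∈ range (N + 1), (bernsteinPolynomial K N m).eval x = 1 := by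
    rw [← eval_finsetSum, bernsteinPolynomial.sum, eval_one]
  obtain ⟨k, hk, hpos⟩ : ∃ k ∈ range (N + 1), 0 < (bernsteinPolynomial K N k).eval x :=
    exists_lt_of_sum_lt (f := fun _ => 0) (by simp [hsum])
  have hcN : ∀ m ∈ range (N + 1), c m < 0 := fun m hm =>
    hc m (Nat.lt_succ_iff.mp (mem_range.mp hm))
  simp only [bernsteinSum, eval_finsetSum, eval_C_mul]
  exact sum_neg' (fun m hm => mul_nonpos_of_nonpos_of_nonneg (hcN m hm).le (hb m))
    ⟨k, hk, mul_neg_of_neg_of_pos (hcN k hk) hpos⟩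

section Calculus

variable {𝕜 : Type*} [NontriviallyNormedField 𝕜]

theorem deriv_eval_div (p : 𝕜[X]) (r : 𝕜) :
    deriv (fun v => p.eval (v / r)) = fun v => r⁻¹ * p.derivative.eval (v / r) := by
  funext v
  have hdiv : HasDerivAt (fun v => v / r) (1 / r) v := (hasDerivAt_id' v).div_const r
  have h : HasDerivAt (fun v => p.eval (v / r)) (p.derivative.eval (v / r) * (1 / r)) v :=
    HasDerivAt.comp (h₂ := fun x => p.eval x) v (p.hasDerivAt (v / r)) hdiv
  rw [h.deriv]
  ring

theorem mul_deriv_deriv_add_mul_deriv_deriv_deriv_eval_div (p : 𝕜[X]) (s r v : 𝕜) :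
    s * deriv (deriv fun v => p.eval (v / r)) v
        + v * deriv (deriv (deriv fun v => p.eval (v / r))) v
      = r⁻¹ ^ 2 * (C s * derivative (derivative p)
          + X * derivative (derivative (derivative p))).eval (v / r) := by
  simp only [deriv_eval_div, deriv_const_mul_field', eval_add, eval_mul, eval_C, eval_X]
  ring

end Calculus

theorem log_secondDiff_eq {u : ℝ} (hu : 0 < u) :
    Real.log (u + 2) - 2 * Real.log (u + 1) + Real.log u
      = Real.log (u * (u + 2) / (u + 1) ^ 2) := by
  rw [Real.log_div (by positivity) (by positivity), Real.log_mul (by positivity) (by positivity),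
    Real.log_pow]
  push_cast
  ring

theorem log_secondDiff_le {u : ℝ} (hu : 0 < u) :
    Real.log (u + 2) - 2 * Real.log (u + 1) + Real.log u ≤ -1 / (u + 1) ^ 2 := by
  rw [log_secondDiff_eq hu]
  calc Real.log (u * (u + 2) / (u + 1) ^ 2) ≤ u * (u + 2) / (u + 1) ^ 2 - 1 :=
        Real.log_le_sub_one_of_pos (by positivity)
    _ = -1 / (u + 1) ^ 2 := by field_simp; ring

theorem neg_inv_le_log_secondDiff {u : ℝ} (hu : 0 < u) :
    -1 / (u * (u + 2)) ≤ Real.log (u + 2) - 2 * Real.log (u + 1) + Real.log u := by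
  rw [log_secondDiff_eq hu]
  calc -1 / (u * (u + 2)) = 1 - (u * (u + 2) / (u + 1) ^ 2)⁻¹ := by field_simp; ring
    _ ≤ Real.log (u * (u + 2) / (u + 1) ^ 2) := Real.one_sub_inv_le_log_of_pos (by positivity)

theorem fwdDiff_fwdDiff_log_natCast_add (ω : ℝ) (k : ℕ) :
    Δ_[1] (Δ_[1] (fun m : ℕ => Real.log (m + ω))) k
      = Real.log ((k + ω) + 2) - 2 * Real.log ((k + ω) + 1) + Real.log (k + ω) := by
  simp only [fwdDiff]
  push_cast
  ring_nf

theorem three_add_mul_fwdDiff_fwdDiff_log_sub_neg {ω : ℝ} (hω : 1 < ω) (k : ℕ) :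
    (3 + k) * Δ_[1] (Δ_[1] (fun m : ℕ => Real.log (m + ω))) k
      - k * Δ_[1] (Δ_[1] (fun m : ℕ => Real.log (m + ω))) (k - 1) < 0 := by
  simp only [fwdDiff_fwdDiff_log_natCast_add]
  cases k with
  | zero =>
    have hupper := log_secondDiff_le (by linarith : (0 : ℝ) < ω)
    have hneg : -1 / (ω + 1) ^ 2 < 0 := div_neg_of_neg_of_pos (by norm_num) (by positivity)
    simp only [Nat.cast_zero, zero_add, zero_mul, sub_zero]
    linarith
  | succ j =>
    set u : ℝ := j + ω
    have hu : 0 < u := by positivity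
    simp only [Nat.add_sub_cancel, Nat.cast_succ, show (j : ℝ) + 1 + ω = u + 1 by ring]
    have hupper := log_secondDiff_le (u := u + 1) (by positivity)
    have hlower := neg_inv_le_log_secondDiff hu
    have key : (j + 1) / (u * (u + 2)) < (j + 4) / (u + 2) ^ 2 := by
      rw [div_lt_div_iff₀ (by positivity) (by positivity)]
      nlinarith
    have h1 := mul_le_mul_of_nonneg_left hupper (by positivity : (0 : ℝ) ≤ 3 + (j + 1))
    have h2 := mul_le_mul_of_nonneg_left hlower (by positivity : (0 : ℝ) ≤ j + 1)
    have e1 : (3 + (j + 1)) * (-1 / (u + 1 + 1) ^ 2) = -((j + 4) / (u + 2) ^ 2) := by ring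
    have e2 : (j + 1) * (-1 / (u * (u + 2))) = -((j + 1) / (u * (u + 2))) := by ring
    linarith

theorem Jt_succ_eq_eval_bernsteinSum (N : ℕ) (ω₀ vbar : ℝ) :
    Jt (N + 1) ω₀ vbar
      = fun v => (bernsteinSum (fun m : ℕ => Real.log (m + ω₀)) N).eval (v / vbar) := by
  funext v
  simp only [Jt, bernsteinSum, bernsteinPolynomial, Nat.add_sub_cancel, eval_finsetSum, eval_mul,
    eval_C, eval_natCast, eval_pow, eval_X, eval_sub, eval_one]
  exact sum_congr rfl fun m _ => by ring

/-- For every integer `n ≥ 3` and every `v ∈ [0, v̄]`: `3·J̃''(v) + v·J̃'''(v) < 0`. -/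
theorem stmt13 (n : ℕ) (hn : 3 ≤ n) (ω₀ vbar : ℝ) (hω : 1 < ω₀) (hv : 0 < vbar) :
    ∀ v ∈ Set.Icc (0 : ℝ) vbar,
      3 * deriv (deriv (Jt n ω₀ vbar)) v +
        v * deriv (deriv (deriv (Jt n ω₀ vbar))) v < 0 := by
  obtain ⟨K, rfl⟩ : ∃ K, n = K + 1 + 1 + 1 := ⟨n - 3, by omega⟩
  rintro v ⟨hv0, hv1⟩
  have hx0 : 0 ≤ v / vbar := div_nonneg hv0 hv.le
  have hx1 : v / vbar ≤ 1 := (div_le_one hv).mpr hv1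
  set P := bernsteinSum (fun m : ℕ => Real.log (m + ω₀)) (K + 1 + 1)
  set Q := bernsteinSum (Δ_[1] (Δ_[1] fun m : ℕ => Real.log (m + ω₀))) K
  have hP'' : derivative (derivative P)
      = ((K + 1 + 1 : ℕ) : ℝ[X]) * (((K + 1 : ℕ) : ℝ[X]) * Q) := by
    rw [derivative_bernsteinSum_succ, derivative_natCast_mul, derivative_bernsteinSum_succ]
  have hcomb : C 3 * derivative (derivative P) + X * derivative (derivative (derivative P))
      = ((K + 1 + 1 : ℕ) : ℝ[X]) *
          (((K + 1 : ℕ) : ℝ[X]) * (C 3 * Q + X * derivative Q)) := by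
    rw [hP'', derivative_natCast_mul, derivative_natCast_mul]
    ring
  rw [Jt_succ_eq_eval_bernsteinSum, mul_deriv_deriv_add_mul_deriv_deriv_deriv_eval_div, hcomb,
    C_mul_bernsteinSum_add_X_mul_derivative, eval_natCast_mul, eval_natCast_mul]
  exact mul_neg_of_pos_of_neg (by positivity) <| mul_neg_of_pos_of_neg (by positivity) <|
    mul_neg_of_pos_of_neg (by positivity) <|
      eval_bernsteinSum_neg hx0 hx1 fun k _ => three_add_mul_fwdDiff_fwdDiff_log_sub_neg hω k
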